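/- arXiv:1703.06974 — 3 statements merged into one kernel-verified Lean document; each statement's English description precedes it below -/
import Mathlib

section
/- Let S be a commutative ring, I an ideal, and let M, M' be free S-modules with adapted filtrations Fil¹M = (⊕_{i≤d₁} S e_i) ⊕ (⊕_{i>d₁} I e_i) and Fil¹M' = (⊕_{j≤ν₁} S w_j) ⊕ (⊕_{j>ν₁} I w_j). Define Fil¹(M⊗M') = im(Fil¹M ⊗ M' + M ⊗ Fil¹M') ⊆ M⊗M'. Then an element e = Σ s_{ij} e_i⊗w_j lies in Fil¹(M⊗M') if and only if s_{ij} ∈ I for all pairs (i,j) with i > d₁ and j > ν₁. -/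
/-!
A vector lies in `span {b k | p k} ⊔ I • ⊤` exactly when its `b`-coordinates off `p` lie in
`I`. Since the `(i, j)`-coordinate of `m ⊗ n` in the basis `e i ⊗ w j` is the product of the
coordinates of `m` and `n`, the filtration `Fil¹M ⊗ M' + M ⊗ Fil¹M'` is again of this form for
the tensor basis, with `p (i, j) := i < d₁ ∨ j < ν₁`; reading off coordinates gives the
theorem.
-/

open TensorProduct Submodule Module.Basis

theorem TensorProduct.smul_top_le_map₂_mk_left {S M N : Type*} [CommRing S] [AddCommGroup M]
    [Module S M] [AddCommGroup N] [Module S N] {I : Ideal S} {F : Submodule S M}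
    (hF : I • ⊤ ≤ F) :
    I • (⊤ : Submodule S (M ⊗[S] N)) ≤ Submodule.map₂ (TensorProduct.mk S M N) F ⊤ := by
  rw [smul_le]
  rintro r hr x -
  induction x using TensorProduct.induction_on with
  | zero => simp
  | tmul m n =>
    rw [smul_tmul']
    exact apply_mem_map₂ _ (hF (smul_mem_smul hr mem_top)) mem_top
  | add x y hx hy =>
    rw [smul_add]
    exact add_mem hx hy

namespace Module.Basis

variable {S ι κ M N : Type*} [CommRing S] [AddCommGroup M] [Module S M] [AddCommGroup N]
  [Module S N] (I : Ideal S)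

/-- The paper's `Fil¹M = (⊕_{p k} S b_k) ⊕ (⊕_{¬ p k} I b_k)`. -/
def adaptedFil (b : Basis ι S M) (p : ι → Prop) : Submodule S M :=
  span S (Set.range fun k : {k // p k} => b k.1) ⊔ I • ⊤

variable {I}

theorem repr_mem_of_mem_adaptedFil {b : Basis ι S M} {p : ι → Prop} {x : M}
    (hx : x ∈ b.adaptedFil I p) {k : ι} (hk : ¬p k) : b.repr x k ∈ I := by
  suffices b.adaptedFil I p ≤ comap (b.coord k) I from this hx
  refine sup_le (span_le.mpr ?_) (smul_le.mpr fun r hr m _ => ?_)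
  · rintro _ ⟨⟨l, hl⟩, rfl⟩
    have hlk : l ≠ k := by rintro rfl; exact hk hl
    simp [hlk]
  · simpa using I.mul_mem_right _ hr

theorem mem_adaptedFil_iff {b : Basis ι S M} {p : ι → Prop} {x : M} :
    x ∈ b.adaptedFil I p ↔ ∀ k, ¬p k → b.repr x k ∈ I := by
  refine ⟨fun hx k hk => repr_mem_of_mem_adaptedFil hx hk, fun h => ?_⟩
  rw [← b.linearCombination_repr x, Finsupp.linearCombination_apply]
  refine sum_mem fun k _ => ?_
  by_cases hk : p k
  · exact mem_sup_left (smul_mem _ _ (subset_span ⟨⟨k, hk⟩, rfl⟩))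
  · exact mem_sup_right (smul_mem_smul (h k hk) mem_top)

theorem adaptedFil_tensorProduct (b : Basis ι S M) (c : Basis κ S N) (p : ι → Prop)
    (q : κ → Prop) :
    map₂ (TensorProduct.mk S M N) (b.adaptedFil I p) ⊤ ⊔
        map₂ (TensorProduct.mk S M N) ⊤ (c.adaptedFil I q) =
      (b.tensorProduct c).adaptedFil I fun k => p k.1 ∨ q k.2 := by
  apply le_antisymm
  · refine sup_le (map₂_le.mpr fun m hm n _ => ?_) (map₂_le.mpr fun m _ n hn => ?_) <;>
      rw [mem_adaptedFil_iff] <;> rintro ⟨i, j⟩ hij <;> rw [not_or] at hij <;>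
      rw [TensorProduct.mk_apply, tensorProduct_repr_tmul_apply, smul_eq_mul]
    · exact I.mul_mem_left _ (repr_mem_of_mem_adaptedFil hm hij.1)
    · exact I.mul_mem_right _ (repr_mem_of_mem_adaptedFil hn hij.2)
  · refine sup_le (span_le.mpr ?_) (le_sup_of_le_left (smul_top_le_map₂_mk_left le_sup_right))
    rintro _ ⟨⟨⟨i, j⟩, hi | hj⟩, rfl⟩ <;> dsimp only <;> rw [tensorProduct_apply]
    · exact mem_sup_left <|
        apply_mem_map₂ _ (mem_sup_left (subset_span ⟨⟨i, hi⟩, rfl⟩)) mem_top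
    · exact mem_sup_right <|
        apply_mem_map₂ _ mem_top (mem_sup_left (subset_span ⟨⟨j, hj⟩, rfl⟩))

theorem tensorProduct_repr_sum_smul_tmul [Fintype ι] [Fintype κ] (b : Basis ι S M)
    (c : Basis κ S N) (s : ι → κ → S) (i : ι) (j : κ) :
    (b.tensorProduct c).repr (∑ i, ∑ j, s i j • (b i ⊗ₜ[S] c j)) (i, j) = s i j := by
  simp_rw [← tensorProduct_apply b c]
  rw [← Fintype.sum_prod_type' (f := fun i j => s i j • (b.tensorProduct c) (i, j)),
    repr_sum_self]

end Module.Basis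

theorem stmt6 (S : Type*) [CommRing S] (I : Ideal S)
    (M M' : Type*) [AddCommGroup M] [Module S M] [AddCommGroup M'] [Module S M']
    (d ν d₁ ν₁ : ℕ) (e : Module.Basis (Fin d) S M) (w : Module.Basis (Fin ν) S M')
    (F1 : Submodule S M) (F1' : Submodule S M') (F12 : Submodule S (M ⊗[S] M'))
    (hF1 : F1 = Submodule.span S (Set.range fun i : {i : Fin d // (i : ℕ) < d₁} => e i.1)
        ⊔ I • (⊤ : Submodule S M))
    (hF1' : F1' = Submodule.span S (Set.range fun j : {j : Fin ν // (j : ℕ) < ν₁} => w j.1)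
        ⊔ I • (⊤ : Submodule S M'))
    (hF12 : F12 = Submodule.map₂ (TensorProduct.mk S M M') F1 ⊤
        ⊔ Submodule.map₂ (TensorProduct.mk S M M') ⊤ F1') :
    ∀ s : Fin d → Fin ν → S,
      (∑ i : Fin d, ∑ j : Fin ν, s i j • (e i ⊗ₜ[S] w j)) ∈ F12 ↔
        ∀ (i : Fin d) (j : Fin ν), d₁ ≤ (i : ℕ) → ν₁ ≤ (j : ℕ) → s i j ∈ I := by
  intro s
  have hF1 : F1 = e.adaptedFil I fun i => (i : ℕ) < d₁ := hF1
  have hF1' : F1' = w.adaptedFil I fun j => (j : ℕ) < ν₁ := hF1'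
  rw [hF12, hF1, hF1', adaptedFil_tensorProduct, mem_adaptedFil_iff]
  simp only [tensorProduct_repr_sum_smul_tmul, Prod.forall, not_or, not_lt, and_imp]
end

section
/- Let p be a prime, K a finite extension of ℚ_p, W the Witt vectors of its residue field, E(u) ∈ W[u] an Eisenstein polynomial of degree e, and S the p-adic completion of the divided power envelope of W[u] with respect to (E(u)). Then the unique continuous σ-semilinear ring endomorphism φ of S with φ(u) = u^p satisfies φ(E(u)) ∈ pS, i.e., the element c := φ(E(u))/p is a well-defined element of S, and c is a unit in S. -/
/-!
Write `E = X^e + p G` with `G(0) = a₀`. Then `φ(E(u)) = u^{pe} + p G^σ(u^p)`, and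
`G^σ(u^p) ≡ σ(a₀)` modulo `u`. Since `E(u) ≡ u^e` modulo `p`, we get `u^{pe} ≡ E(u)^p = p! γ_p`
modulo `p²`, so `φ(E(u)) = p c` with `c ≡ σ(a₀) + (p-1)! γ_p` modulo the maximal ideal. Finally
`γ_p` lies in the maximal ideal because `γ_p^p = ((p²)! / (p!)^p) γ_{p²}` and `p` divides
`(p²)! / (p!)^p`; hence `c` is a unit.
-/

open Polynomial IsLocalRing

namespace Polynomial

variable {R : Type*} [CommRing R]

theorem Monic.exists_eq_X_pow_add_C_mul {E : R[X]} {n : ℕ} {r a : R}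
    (hmonic : E.Monic) (hdeg : E.natDegree = n) (hn : 0 < n)
    (hlow : ∀ i < n, E.coeff i ∈ Ideal.span {r}) (hcoeff0 : E.coeff 0 = r * a) :
    ∃ G : R[X], E = X ^ n + C r * G ∧ G.coeff 0 = a := by
  have hmem : E - X ^ n ∈ Ideal.span {C r} := by
    rw [← Set.image_singleton, ← Ideal.map_span, Ideal.mem_map_C_iff]
    intro i
    rcases lt_trichotomy i n with hi | rfl | hi
    · simpa [coeff_X_pow, hi.ne] using hlow i hi
    · simp [← hdeg, hmonic.coeff_natDegree]
    · simp [coeff_X_pow, hi.ne', coeff_eq_zero_of_natDegree_lt (hdeg ▸ hi)]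
  obtain ⟨G, hG⟩ := Ideal.mem_span_singleton'.mp hmem
  refine ⟨G + C (a - G.coeff 0), ?_, by simp⟩
  have hG0 : r * G.coeff 0 = r * a := by
    simpa [hn.ne, coeff_X_pow, hcoeff0, mul_comm] using congrArg (coeff · 0) hG
  rw [mul_add, ← C_mul, mul_sub, ← hG0, sub_self, C_0, add_zero, mul_comm, hG]
  ring

theorem dvd_eval₂_sub_coeff_zero {S : Type*} [CommRing S] (f : R →+* S) (x : S) (G : R[X]) :
    x ∣ G.eval₂ f x - f (G.coeff 0) := by
  have hX : (X : R[X]) ∣ G - C (G.coeff 0) := X_dvd_sub_C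
  simpa using _root_.map_dvd (eval₂RingHom f x) hX

end Polynomial

namespace IsLocalRing

open Nat

variable {S : Type*} [CommRing S] [IsLocalRing S]

theorem isUnit_natCast_of_coprime {p n : ℕ} (hp : (p : S) ∈ maximalIdeal S)
    (h : p.Coprime n) : IsUnit (n : S) := by
  obtain ⟨a, b, hab⟩ := (Nat.isCoprime_iff_coprime.mpr h).map (Int.castRingHom S)
  simp only [eq_intCast, Int.cast_natCast] at hab
  refine (isUnit_or_isUnit_of_add_one hab).elim (fun hap => ?_) isUnit_of_mul_isUnit_right
  exact absurd (isUnit_of_mul_isUnit_right hap) ((mem_maximalIdeal _).mp hp)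

theorem isUnit_add_of_mem_maximalIdeal {a v : S} (ha : IsUnit a) (hv : v ∈ maximalIdeal S) :
    IsUnit (a + v) := by
  have hsum : IsUnit (a + v + -v) := by simpa using ha
  refine (isUnit_or_isUnit_of_isUnit_add hsum).resolve_right ?_
  simpa [IsUnit.neg_iff] using (mem_maximalIdeal _).mp hv

theorem isLeftRegular_natCast_factorial_of_prime {p : ℕ} (hp : p.Prime)
    (hpmem : (p : S) ∈ maximalIdeal S) (hpreg : IsLeftRegular (p : S)) :
    IsLeftRegular (p ! : S) := by
  have hunit : IsUnit ((p - 1)! : S) :=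
    isUnit_natCast_of_coprime hpmem (hp.coprime_iff_not_dvd.mpr fun h => by
      have := hp.dvd_factorial.mp h
      have := hp.two_le
      omega)
  rw [← mul_factorial_pred hp.ne_zero, Nat.cast_mul]
  exact hpreg.mul hunit.isRegular.left

end IsLocalRing

section DividedPowers

open Nat

variable {S : Type*} [CommRing S] {x : S} {γ : ℕ → S}

theorem pow_eq_uniformBell_mul_of_factorial_mul_eq_pow (hγ : ∀ n, (n ! : S) * γ n = x ^ n)
    {m n : ℕ} (hn : n ≠ 0) (hreg : IsLeftRegular (n ! : S)) :
    γ n ^ m = (m.uniformBell n * m ! : ℕ) * γ (m * n) := by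
  apply hreg.pow m
  dsimp only
  rw [← mul_pow, hγ, ← pow_mul, mul_comm n, ← hγ, ← uniformBell_mul_eq m hn]
  push_cast
  ring

theorem dividedPower_prime_mem_maximalIdeal [IsLocalRing S] (hγ : ∀ n, (n ! : S) * γ n = x ^ n)
    {p : ℕ} (hp : p.Prime) (hpmem : (p : S) ∈ maximalIdeal S) (hpreg : IsLeftRegular (p : S)) :
    γ p ∈ maximalIdeal S := by
  refine (maximalIdeal.isMaximal S).isPrime.mem_of_pow_mem p ?_
  rw [pow_eq_uniformBell_mul_of_factorial_mul_eq_pow hγ hp.ne_zero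
    (isLeftRegular_natCast_factorial_of_prime hp hpmem hpreg)]
  obtain ⟨k, hk⟩ : p ∣ p.uniformBell p * p ! :=
    dvd_mul_of_dvd_right (dvd_factorial hp.pos le_rfl) _
  rw [hk, Nat.cast_mul, mul_assoc]
  exact Ideal.mul_mem_right _ _ hpmem

end DividedPowers

theorem stmt8_general (p : ℕ) [Fact p.Prime]
    (W : Type*) [CommRing W] (σ : W →+* W)
    (E : Polynomial W) (eK : ℕ) (hmonic : E.Monic) (hdeg : E.natDegree = eK) (he : 0 < eK)
    -- Eisenstein: all lower coefficients divisible by p, constant term p·(unit)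
    (hEis : ∀ i < eK, E.coeff i ∈ Ideal.span {(p : W)})
    (a₀ : W) (ha₀ : E.coeff 0 = p * a₀) (ha₀unit : IsUnit a₀)
    (S : Type*) [CommRing S] (ιS : W →+* S) (u : S)
    (φ : S →+* S)
    (hφW : ∀ x : W, φ (ιS x) = ιS (σ x))
    (hφu : φ u = u ^ p)
    -- divided powers of E(u) in S
    (γ : ℕ → S) (hγ : ∀ n : ℕ, (n.factorial : S) * γ n = (Polynomial.eval₂ ιS u E) ^ n)
    -- p-adic completeness and p-torsion-freeness of S
    (hreg : ∀ x : S, (p : S) * x = 0 → x = 0)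
    -- S is local, with p and u in the maximal ideal, and W-units map to units
    [IsLocalRing S]
    (hpmem : (p : S) ∈ IsLocalRing.maximalIdeal S)
    (humem : u ∈ IsLocalRing.maximalIdeal S)
    (hιunit : ∀ x : W, IsUnit x → IsUnit (ιS x)) :
    ∃ c : S, (p : S) * c = φ (Polynomial.eval₂ ιS u E) ∧ IsUnit c ∧
      ∀ c' : S, (p : S) * c' = φ (Polynomial.eval₂ ιS u E) → c' = c := by
  have hp : p.Prime := Fact.out
  have hpreg : IsLeftRegular (p : S) := isLeftRegular_of_non_zero_divisor _ hreg
  set F := E.eval₂ ιS u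
  obtain ⟨G, rfl, hG0⟩ := hmonic.exists_eq_X_pow_add_C_mul hdeg he hEis ha₀
  have hF : F = u ^ eK + p * G.eval₂ ιS u := by simp [F]
  have hφF : φ F = (u ^ p) ^ eK + p * G.eval₂ (ιS.comp σ) (u ^ p) := by
    rw [hom_eval₂, hφu, show φ.comp ιS = ιS.comp σ from RingHom.ext hφW]
    simp
  obtain ⟨D, hD⟩ : (p : S) ^ 2 ∣ F ^ p - (u ^ eK) ^ p := by
    simpa using dvd_sub_pow_of_dvd_sub (p := p) ⟨G.eval₂ ιS u, by rw [hF]; ring⟩ 1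
  obtain ⟨h, hh⟩ : u ∣ G.eval₂ (ιS.comp σ) (u ^ p) - ιS (σ a₀) := by
    have := dvd_eval₂_sub_coeff_zero (ιS.comp σ) (u ^ p) G
    rw [hG0, RingHom.comp_apply] at this
    exact (dvd_pow_self u hp.ne_zero).trans this
  have hFp : F ^ p = p * ((p - 1).factorial * γ p) := by
    rw [← hγ, ← Nat.mul_factorial_pred hp.ne_zero]
    push_cast
    ring
  set v := u * h + (p - 1).factorial * γ p - p * D
  have hc : (p : S) * (ιS (σ a₀) + v) = φ F := by
    rw [hφF]
    linear_combination -(p : S) * hh + hD - hFp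
  have hv : v ∈ maximalIdeal S := by
    refine Ideal.sub_mem _ (Ideal.add_mem _ (Ideal.mul_mem_right _ _ humem) ?_)
      (Ideal.mul_mem_right _ _ hpmem)
    exact Ideal.mul_mem_left _ _ (dividedPower_prime_mem_maximalIdeal hγ hp hpmem hpreg)
  refine ⟨_, hc, isUnit_add_of_mem_maximalIdeal (hιunit _ (ha₀unit.map σ)) hv, fun c' hc' => ?_⟩
  exact hpreg (hc'.trans hc.symm)

theorem stmt8 (p : ℕ) [Fact p.Prime]
    (W : Type*) [CommRing W] (σ : W →+* W)
    (E : Polynomial W) (eK : ℕ) (hmonic : E.Monic) (hdeg : E.natDegree = eK) (he : 0 < eK)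
    -- Eisenstein: all lower coefficients divisible by p, constant term p·(unit)
    (hEis : ∀ i < eK, E.coeff i ∈ Ideal.span {(p : W)})
    (a₀ : W) (ha₀ : E.coeff 0 = p * a₀) (ha₀unit : IsUnit a₀)
    (S : Type*) [CommRing S] (ιS : W →+* S) (u : S)
    (φ : S →+* S)
    (hφW : ∀ x : W, φ (ιS x) = ιS (σ x))
    (hφu : φ u = u ^ p)
    -- divided powers of E(u) in S
    (γ : ℕ → S) (hγ : ∀ n : ℕ, (n.factorial : S) * γ n = (Polynomial.eval₂ ιS u E) ^ n)
    (hγ1 : γ 1 = Polynomial.eval₂ ιS u E)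
    -- p-adic completeness and p-torsion-freeness of S
    (hcomp : IsAdicComplete (Ideal.span {(p : S)}) S)
    (hreg : ∀ x : S, (p : S) * x = 0 → x = 0)
    -- S is local, with p and u in the maximal ideal, and W-units map to units
    [IsLocalRing S]
    (hpmem : (p : S) ∈ IsLocalRing.maximalIdeal S)
    (humem : u ∈ IsLocalRing.maximalIdeal S)
    (hιunit : ∀ x : W, IsUnit x → IsUnit (ιS x)) :
    ∃ c : S, (p : S) * c = φ (Polynomial.eval₂ ιS u E) ∧ IsUnit c ∧
      ∀ c' : S, (p : S) * c' = φ (Polynomial.eval₂ ιS u E) → c' = c :=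
  stmt8_general p W σ E eK hmonic hdeg he hEis a₀ ha₀ ha₀unit S ιS u φ hφW hφu γ hγ hreg hpmem humem
    hιunit
end

section
/- Let S be a commutative ring with an ideal I and a ring endomorphism φ with φ(I) ⊆ pS, and let M, M' be filtered free modules of weight one over S with divided Frobenii φ₁. Suppose e ∈ Fil¹(M⊗M') satisfies φ₁(e) = e, where φ₁ on Fil¹(M⊗M') is defined using the Frobenius structures on M and M'. Then the associated map F_e : M* → M' commutes with the divided Frobenii, i.e., φ₁ ∘ F_e = F_e ∘ φ₁* on Fil¹(M*), where φ₁* is the dual Frobenius defined by φ₁*(f)(φ₁(E(u)^{r_i}e_i)) = φ₁(f(E(u)^{r_i}e_i)). -/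
/-!
Expand `e = ∑ s_{ij} e_i ⊗ w_j` and contract against `g = φ₁*(f)`: then `F_e(g) = ⟨g, e⟩ =
⟨g, φ₁(e)⟩`, so it suffices to match `φ₁` of each term `s_{ij} f(e_i) w_j` of `F_e(f)` with
the contraction of `φ₁(s_{ij} e_i ⊗ w_j)`. Writing `φ₀ = c⁻¹ φ₁(E ·)`, which is `φ`-semilinear
everywhere, the dual Frobenius satisfies `g(φ₀ e_i) = φ(f(e_i))` for every `i`; when
`w_j ∈ Fil¹` this settles the term. Otherwise either `e_i ∈ Fil¹` and `f(e_i) ∈ I`, or both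
`e_i` and `w_j` lie outside `Fil¹`, and then `s_{ij} ∈ I`; in both cases `φ₁` of the term is
computed through the divisibility `φ₁(s x) = φ₁(s) φ₀(x)` for `s ∈ I`.
-/

open TensorProduct

section DividedFrobenius

variable {S : Type*} [CommRing S] {M : Type*} [AddCommGroup M] [Module S M]

def frobZero (c : Sˣ) (E : S) (φ1 : M → M) (x : M) : M :=
  (c⁻¹ : Sˣ) • φ1 (E • x)

structure IsDividedFrobenius (I : Ideal S) (φS : S →+* S) (φ1S : S → S) (E : S) (c : Sˣ)
    (F1 : Submodule S M) (φ1 : M → M) : Prop where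
  smul_top_le : I • (⊤ : Submodule S M) ≤ F1
  map_smul_of_mem_fil : ∀ (s : S), ∀ x ∈ F1, φ1 (s • x) = φS s • φ1 x
  map_smul_of_mem_ideal : ∀ s ∈ I, ∀ x : M, φ1 (s • x) = φ1S s • frobZero c E φ1 x

namespace IsDividedFrobenius

variable {I : Ideal S} {φS : S →+* S} {φ1S : S → S} {E : S} {c : Sˣ} {F1 : Submodule S M}
  {φ1 : M → M}

theorem smul_mem_fil (hφ : IsDividedFrobenius I φS φ1S E c F1 φ1) {s : S} (hs : s ∈ I)
    (x : M) : s • x ∈ F1 :=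
  hφ.smul_top_le (Submodule.smul_mem_smul hs Submodule.mem_top)

theorem frobZero_smul (hφ : IsDividedFrobenius I φS φ1S E c F1 φ1) (hE : E ∈ I)
    (s : S) (x : M) : frobZero c E φ1 (s • x) = φS s • frobZero c E φ1 x := by
  rw [frobZero, frobZero, smul_comm E s x,
    hφ.map_smul_of_mem_fil s _ (hφ.smul_mem_fil hE x), smul_comm]

theorem frobZero_eq_natCast_smul {p : ℕ} (hφ : IsDividedFrobenius I φS φ1S E c F1 φ1)
    (hφ1S : ∀ s ∈ I, (p : S) * φ1S s = φS s) (hE : E ∈ I) (hc : (c : S) = φ1S E)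
    {x : M} (hx : x ∈ F1) : frobZero c E φ1 x = (p : S) • φ1 x := by
  rw [frobZero, hφ.map_smul_of_mem_fil E x hx, ← hφ1S E hE, ← hc, Units.smul_def, smul_smul,
    mul_left_comm, Units.inv_mul, mul_one]

theorem map_mul_of_mem (hφ : IsDividedFrobenius I φS φ1S E c F1 φ1) {x : M}
    (hx : ∀ a : S, a • φ1 (E • x) = 0 → a = 0) {s : S} (hs : s ∈ I) (u : S) :
    φ1S (s * u) = φ1S s * φS u := by
  have h : φ1 ((s * u) • x) = φ1 (u • s • x) := by rw [smul_smul, mul_comm]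
  rw [hφ.map_smul_of_mem_ideal _ (I.mul_mem_right u hs),
    hφ.map_smul_of_mem_fil u _ (hφ.smul_mem_fil hs x), hφ.map_smul_of_mem_ideal s hs,
    frobZero, Units.smul_def, smul_smul, smul_smul, smul_smul, ← sub_eq_zero, ← sub_smul] at h
  have := hx _ h
  rw [← sub_mul, Units.mul_left_eq_zero, sub_eq_zero] at this
  rw [this, mul_comm]

theorem apply_frobZero_of_mem_fil {p : ℕ} (hφ : IsDividedFrobenius I φS φ1S E c F1 φ1)
    (hφ1S : ∀ s ∈ I, (p : S) * φ1S s = φS s) (hE : E ∈ I) (hc : (c : S) = φ1S E)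
    {g : Module.Dual S M} {x : M} (hx : x ∈ F1) {t : S} (ht : t ∈ I)
    (hg : g (φ1 x) = φ1S t) : g (frobZero c E φ1 x) = φS t := by
  rw [hφ.frobZero_eq_natCast_smul hφ1S hE hc hx, map_smul, hg, smul_eq_mul, hφ1S t ht]

theorem apply_frobZero_of_regular (hφ : IsDividedFrobenius I φS φ1S E c F1 φ1) (hE : E ∈ I)
    (hc : (c : S) = φ1S E) {g : Module.Dual S M} {x : M}
    (hx : ∀ a : S, a • φ1 (E • x) = 0 → a = 0) {t : S} (hg : g (φ1 (E • x)) = φ1S (E * t)) :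
    g (frobZero c E φ1 x) = φS t := by
  rw [frobZero, Units.smul_def, map_smul, hg, hφ.map_mul_of_mem hx hE, ← hc, smul_eq_mul,
    ← mul_assoc, Units.inv_mul, one_mul]

theorem apply_frobZero_of_adapted_basis {p : ℕ} (hφ : IsDividedFrobenius I φS φ1S E c F1 φ1)
    (hφ1S : ∀ s ∈ I, (p : S) * φ1S s = φS s) (hE : E ∈ I) (hc : (c : S) = φ1S E)
    {ι : Type*} {P : ι → Prop} [DecidablePred P] {e : ι → M} (he : ∀ i, P i → e i ∈ F1)
    {n : ι → ℕ} (hn : ∀ i, n i = if P i then 0 else 1) (bx : Module.Basis ι S M)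
    (hbx : ∀ i, bx i = φ1 (E ^ n i • e i)) {f g : Module.Dual S M} (hf : ∀ y ∈ F1, f y ∈ I)
    (hg : ∀ i, g (bx i) = φ1S (E ^ n i * f (e i))) (i : ι) :
    g (frobZero c E φ1 (e i)) = φS (f (e i)) := by
  by_cases hi : P i
  · exact hφ.apply_frobZero_of_mem_fil hφ1S hE hc (he i hi) (hf _ (he i hi))
      (by simpa [hbx, hn, hi] using hg i)
  have hbx_i : bx i = φ1 (E • e i) := by simp [hbx, hn, hi]
  refine hφ.apply_frobZero_of_regular hE hc (fun a ha => ?_) (by simpa [hbx, hn, hi] using hg i)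
  rw [← hbx_i] at ha
  simpa using congrArg (fun z => bx.repr z i) ha

end IsDividedFrobenius

end DividedFrobenius

section TensorFrobenius

variable {S : Type*} [CommRing S] {I : Ideal S} {φS : S →+* S} {φ1S : S → S} {E : S} {c : Sˣ}
  {M M' : Type*} [AddCommGroup M] [Module S M] [AddCommGroup M'] [Module S M']
  {F1 : Submodule S M} {F1' : Submodule S M'} {φ1 : M → M} {φ1' : M' → M'}
  {φ1T : M ⊗[S] M' → M ⊗[S] M'}

theorem lid_rTensor_frob_smul_tmul_of_mem_fil_right
    (hφ : IsDividedFrobenius I φS φ1S E c F1 φ1) (hφ' : IsDividedFrobenius I φS φ1S E c F1' φ1')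
    (hE : E ∈ I)
    (hT : ∀ (x : M) (y : M'), y ∈ F1' → φ1T (x ⊗ₜ[S] y) = frobZero c E φ1 x ⊗ₜ[S] φ1' y)
    {g : Module.Dual S M} {x : M} {t : S} (hg : g (frobZero c E φ1 x) = φS t)
    (s : S) {y : M'} (hy : y ∈ F1') :
    TensorProduct.lid S M' (g.rTensor M' (φ1T ((s • x) ⊗ₜ[S] y))) = φ1' ((s * t) • y) := by
  rw [hT _ _ hy, LinearMap.rTensor_tmul, TensorProduct.lid_tmul, hφ.frobZero_smul hE, map_smul,
    hg, hφ'.map_smul_of_mem_fil _ _ hy, map_mul, smul_eq_mul]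

theorem lid_rTensor_frob_smul_tmul_of_mem_fil_left
    (hφ : IsDividedFrobenius I φS φ1S E c F1 φ1) (hφ' : IsDividedFrobenius I φS φ1S E c F1' φ1')
    (hE : E ∈ I)
    (hT : ∀ (x : M) (y : M'), x ∈ F1 → φ1T (x ⊗ₜ[S] y) = φ1 x ⊗ₜ[S] frobZero c E φ1' y)
    {g : Module.Dual S M} {x : M} (hx : x ∈ F1) {t : S} (ht : t ∈ I) (hg : g (φ1 x) = φ1S t)
    (s : S) (y : M') :
    TensorProduct.lid S M' (g.rTensor M' (φ1T ((s • x) ⊗ₜ[S] y))) = φ1' ((s * t) • y) := by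
  rw [hT _ _ (F1.smul_mem s hx), LinearMap.rTensor_tmul, TensorProduct.lid_tmul,
    hφ.map_smul_of_mem_fil s x hx, map_smul, hg, mul_comm s t, ← smul_smul,
    hφ'.map_smul_of_mem_ideal t ht, hφ'.frobZero_smul hE, smul_smul, smul_eq_mul, mul_comm]

theorem lid_rTensor_frob_smul_tmul_of_mem_ideal
    (hφ : IsDividedFrobenius I φS φ1S E c F1 φ1) (hφ' : IsDividedFrobenius I φS φ1S E c F1' φ1')
    (hE : E ∈ I)
    (hT : ∀ (x : M) (y : M'), x ∈ F1 → φ1T (x ⊗ₜ[S] y) = φ1 x ⊗ₜ[S] frobZero c E φ1' y)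
    {g : Module.Dual S M} {x : M} {t : S} (hg : g (frobZero c E φ1 x) = φS t)
    {s : S} (hs : s ∈ I) (y : M') :
    TensorProduct.lid S M' (g.rTensor M' (φ1T ((s • x) ⊗ₜ[S] y))) = φ1' ((s * t) • y) := by
  rw [hT _ _ (hφ.smul_mem_fil hs x), LinearMap.rTensor_tmul, TensorProduct.lid_tmul,
    hφ.map_smul_of_mem_ideal s hs, map_smul, hg, ← smul_smul, hφ'.map_smul_of_mem_ideal s hs,
    hφ'.frobZero_smul hE, smul_smul, smul_eq_mul]

end TensorFrobenius

namespace Module.Basis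

variable {S : Type*} [CommRing S] {M M' : Type*} [AddCommGroup M] [Module S M]
  [AddCommGroup M'] [Module S M'] {ι κ : Type*}

theorem repr_mem_of_mem_span_sup_smul_top (b : Basis ι S M) {I : Ideal S} {P : ι → Prop}
    {x : M} (hx : x ∈ Submodule.span S (Set.range fun i : {i // P i} => b i.1) ⊔ I • ⊤)
    {i : ι} (hi : ¬P i) : b.repr x i ∈ I := by
  suffices h : Submodule.span S (Set.range fun i : {i // P i} => b i.1) ⊔ I • ⊤ ≤
      Submodule.comap ((Finsupp.lapply i).comp b.repr.toLinearMap) I from h hx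
  refine sup_le (Submodule.span_le.mpr ?_) (Submodule.smul_le.mpr fun r hr m _ => ?_)
  · rintro _ ⟨⟨i₀, hi₀⟩, rfl⟩
    have hne : i₀ ≠ i := fun h => hi (h ▸ hi₀)
    simp [hne]
  · simpa using I.mul_mem_right _ hr

theorem tensorProduct_repr_mem_of_mem_sup_map₂ (b : Basis ι S M) (b' : Basis κ S M')
    {I : Ideal S} {F1 : Submodule S M} {F1' : Submodule S M'} {i : ι} {j : κ}
    (hi : ∀ x ∈ F1, b.repr x i ∈ I) (hj : ∀ y ∈ F1', b'.repr y j ∈ I) {t : M ⊗[S] M'}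
    (ht : t ∈ Submodule.map₂ (TensorProduct.mk S M M') F1 ⊤ ⊔
      Submodule.map₂ (TensorProduct.mk S M M') ⊤ F1') :
    (b.tensorProduct b').repr t (i, j) ∈ I := by
  suffices h : Submodule.map₂ (TensorProduct.mk S M M') F1 ⊤ ⊔
      Submodule.map₂ (TensorProduct.mk S M M') ⊤ F1' ≤
      Submodule.comap ((Finsupp.lapply (i, j)).comp (b.tensorProduct b').repr.toLinearMap) I
    from h ht
  refine sup_le (Submodule.map₂_le.mpr fun x hx y _ => ?_)
    (Submodule.map₂_le.mpr fun x _ y hy => ?_)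
  · simpa using I.mul_mem_left _ (hi x hx)
  · simpa using I.mul_mem_right _ (hj y hy)

variable [Fintype ι] [Fintype κ]

theorem lid_rTensor_eq_sum (b : Basis ι S M) (b' : Basis κ S M') (g : Module.Dual S M)
    (t : M ⊗[S] M') :
    TensorProduct.lid S M' (g.rTensor M' t) =
      ∑ q : ι × κ, ((b.tensorProduct b').repr t q * g (b q.1)) • b' q.2 := by
  conv_lhs => rw [← (b.tensorProduct b').sum_repr t]
  simp [tensorProduct_apply', smul_smul]

theorem map_lid_rTensor_of_forall_tmul (b : Basis ι S M) (b' : Basis κ S M') {φ1' : M' → M'}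
    (hφ1' : ∀ x y : M', φ1' (x + y) = φ1' x + φ1' y) {φ1T : M ⊗[S] M' → M ⊗[S] M'}
    (hφ1T : ∀ x y : M ⊗[S] M', φ1T (x + y) = φ1T x + φ1T y) {t : M ⊗[S] M'} (ht : φ1T t = t)
    {f g : Module.Dual S M}
    (hterm : ∀ q : ι × κ, TensorProduct.lid S M'
        (g.rTensor M' (φ1T (((b.tensorProduct b').repr t q • b q.1) ⊗ₜ[S] b' q.2))) =
      φ1' (((b.tensorProduct b').repr t q * f (b q.1)) • b' q.2)) :
    φ1' (TensorProduct.lid S M' (f.rTensor M' t)) = TensorProduct.lid S M' (g.rTensor M' t) := by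
  have ht_sum : t = ∑ q : ι × κ, ((b.tensorProduct b').repr t q • b q.1) ⊗ₜ[S] b' q.2 := by
    conv_lhs => rw [← (b.tensorProduct b').sum_repr t]
    simp [tensorProduct_apply', TensorProduct.smul_tmul']
  calc φ1' (TensorProduct.lid S M' (f.rTensor M' t))
      = ∑ q, φ1' (((b.tensorProduct b').repr t q * f (b q.1)) • b' q.2) := by
        rw [b.lid_rTensor_eq_sum b']
        exact map_sum (AddMonoidHom.mk' φ1' hφ1') _ _
    _ = TensorProduct.lid S M' (g.rTensor M' (φ1T t)) := by
        conv_rhs => rw [ht_sum]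
        rw [show φ1T (∑ q, _) = ∑ q, φ1T _ from map_sum (AddMonoidHom.mk' φ1T hφ1T) _ _,
          map_sum, map_sum]
        simp only [hterm]
    _ = TensorProduct.lid S M' (g.rTensor M' t) := by rw [ht]

end Module.Basis

theorem stmt17_general (p : ℕ)
    (S : Type*) [CommRing S] (I : Ideal S)
    (φS : S →+* S) (φ1S : S → S) (hφ1S : ∀ s ∈ I, (p : S) * φ1S s = φS s)
    (E : S) (hE : E ∈ I) (c : Sˣ) (hc : (c : S) = φ1S E)
    (M M' : Type*) [AddCommGroup M] [Module S M] [AddCommGroup M'] [Module S M']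
    (d ν d₁ ν₁ : ℕ) (e : Module.Basis (Fin d) S M) (w : Module.Basis (Fin ν) S M')
    (ni : Fin d → ℕ) (hni : ∀ i, ni i = if (i : ℕ) < d₁ then 0 else 1)
    -- the filtrations, as in the adapted-basis description:
    (F1 : Submodule S M) (F1' : Submodule S M') (F12 : Submodule S (M ⊗[S] M'))
    (hF1 : F1 = Submodule.span S (Set.range fun i : {i : Fin d // (i : ℕ) < d₁} => e i.1)
        ⊔ I • (⊤ : Submodule S M))
    (hF1' : F1' = Submodule.span S (Set.range fun j : {j : Fin ν // (j : ℕ) < ν₁} => w j.1)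
        ⊔ I • (⊤ : Submodule S M'))
    (hF12 : F12 = Submodule.map₂ (TensorProduct.mk S M M') F1 ⊤
        ⊔ Submodule.map₂ (TensorProduct.mk S M M') ⊤ F1')
    -- divided Frobenii on M and M':
    (φ1M : M → M) (φ1M' : M' → M')
    (hφ1M'add : ∀ x y : M', φ1M' (x + y) = φ1M' x + φ1M' y)
    (hφ1Msemi : ∀ (s : S), ∀ x ∈ F1, φ1M (s • x) = φS s • φ1M x)
    (hφ1M'semi : ∀ (s : S), ∀ x ∈ F1', φ1M' (s • x) = φS s • φ1M' x)
    (hφ1Mdiv : ∀ s ∈ I, ∀ x : M, φ1M (s • x) = φ1S s • (c⁻¹ : Sˣ) • φ1M (E • x))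
    (hφ1M'div : ∀ s ∈ I, ∀ x : M', φ1M' (s • x) = φ1S s • (c⁻¹ : Sˣ) • φ1M' (E • x))
    -- the images of the adapted basis form new bases (strong divisibility):
    (bx : Module.Basis (Fin d) S M) (hbx : ∀ i, bx i = φ1M ((E ^ ni i) • e i))
    -- the divided Frobenius on Fil¹(M ⊗ M'):
    (φ1T : (M ⊗[S] M') → (M ⊗[S] M'))
    (hφ1Tadd : ∀ x y : M ⊗[S] M', φ1T (x + y) = φ1T x + φ1T y)
    (hφ1T₁ : ∀ (x : M) (y : M'), x ∈ F1 →
      φ1T (x ⊗ₜ[S] y) = φ1M x ⊗ₜ[S] ((c⁻¹ : Sˣ) • φ1M' (E • y)))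
    (hφ1T₂ : ∀ (x : M) (y : M'), y ∈ F1' →
      φ1T (x ⊗ₜ[S] y) = ((c⁻¹ : Sˣ) • φ1M (E • x)) ⊗ₜ[S] φ1M' y)
    -- the fixed element e ∈ Fil¹(M ⊗ M') with φ₁(e) = e:
    (eE : M ⊗[S] M') (heE : eE ∈ F12) (hfix : φ1T eE = eE)
    -- the associated map F_e (as in the tensor-hom lemma):
    (Fe : Module.Dual S M →ₗ[S] M')
    (hFe : Fe = ∑ q : Fin d × Fin ν, ((e.tensorProduct w).repr eE q) •
      (LinearMap.smulRight (LinearMap.applyₗ (e q.1) : Module.Dual S M →ₗ[S] S) (w q.2)))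
    -- the dual Frobenius φ₁* on Fil¹(M*):
    (φ1star : Module.Dual S M → Module.Dual S M)
    (hstar : ∀ (f : Module.Dual S M) (i : Fin d),
      (φ1star f) (bx i) = φ1S ((E ^ ni i) * f (e i))) :
    ∀ f : Module.Dual S M, (∀ y ∈ F1, f y ∈ I) → φ1M' (Fe f) = Fe (φ1star f) := by
  intro f hf
  have hM : IsDividedFrobenius I φS φ1S E c F1 φ1M := ⟨hF1 ▸ le_sup_right, hφ1Msemi, hφ1Mdiv⟩
  have hM' : IsDividedFrobenius I φS φ1S E c F1' φ1M' :=
    ⟨hF1' ▸ le_sup_right, hφ1M'semi, hφ1M'div⟩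
  have he : ∀ i : Fin d, (i : ℕ) < d₁ → e i ∈ F1 := fun i hi =>
    hF1 ▸ Submodule.mem_sup_left (Submodule.subset_span ⟨⟨i, hi⟩, rfl⟩)
  have hw : ∀ j : Fin ν, (j : ℕ) < ν₁ → w j ∈ F1' := fun j hj =>
    hF1' ▸ Submodule.mem_sup_left (Submodule.subset_span ⟨⟨j, hj⟩, rfl⟩)
  have hgφ0 := hM.apply_frobZero_of_adapted_basis hφ1S hE hc he hni bx hbx hf (hstar f)
  have hFe_apply : ∀ g, Fe g = TensorProduct.lid S M' (g.rTensor M' eE) := fun g => by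
    rw [e.lid_rTensor_eq_sum w, hFe]
    simp [smul_smul]
  rw [hFe_apply, hFe_apply]
  refine e.map_lid_rTensor_of_forall_tmul w hφ1M'add hφ1Tadd hfix fun ⟨i, j⟩ => ?_
  by_cases hj : (j : ℕ) < ν₁
  · exact lid_rTensor_frob_smul_tmul_of_mem_fil_right hM hM' hE hφ1T₂ (hgφ0 i) _ (hw j hj)
  by_cases hi : (i : ℕ) < d₁
  · exact lid_rTensor_frob_smul_tmul_of_mem_fil_left hM hM' hE hφ1T₁ (he i hi)
      (hf _ (he i hi)) (by simpa [hbx, hni, hi] using hstar f i) _ _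
  refine lid_rTensor_frob_smul_tmul_of_mem_ideal hM hM' hE hφ1T₁ (hgφ0 i) ?_ _
  exact e.tensorProduct_repr_mem_of_mem_sup_map₂ w
    (fun x hx => e.repr_mem_of_mem_span_sup_smul_top (hF1 ▸ hx) hi)
    (fun y hy => w.repr_mem_of_mem_span_sup_smul_top (hF1' ▸ hy) hj) (hF12 ▸ heE)

theorem stmt17 (p : ℕ) [Fact p.Prime]
    (S : Type*) [CommRing S] (I : Ideal S)
    (φS : S →+* S) (φ1S : S → S) (hφ1S : ∀ s ∈ I, (p : S) * φ1S s = φS s)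
    (E : S) (hE : E ∈ I) (c : Sˣ) (hc : (c : S) = φ1S E)
    (M M' : Type*) [AddCommGroup M] [Module S M] [AddCommGroup M'] [Module S M']
    (d ν d₁ ν₁ : ℕ) (e : Module.Basis (Fin d) S M) (w : Module.Basis (Fin ν) S M')
    (ni : Fin d → ℕ) (hni : ∀ i, ni i = if (i : ℕ) < d₁ then 0 else 1)
    (mj : Fin ν → ℕ) (hmj : ∀ j, mj j = if (j : ℕ) < ν₁ then 0 else 1)
    -- the filtrations, as in the adapted-basis description:
    (F1 : Submodule S M) (F1' : Submodule S M') (F12 : Submodule S (M ⊗[S] M'))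
    (hF1 : F1 = Submodule.span S (Set.range fun i : {i : Fin d // (i : ℕ) < d₁} => e i.1)
        ⊔ I • (⊤ : Submodule S M))
    (hF1' : F1' = Submodule.span S (Set.range fun j : {j : Fin ν // (j : ℕ) < ν₁} => w j.1)
        ⊔ I • (⊤ : Submodule S M'))
    (hF12 : F12 = Submodule.map₂ (TensorProduct.mk S M M') F1 ⊤
        ⊔ Submodule.map₂ (TensorProduct.mk S M M') ⊤ F1')
    -- divided Frobenii on M and M':
    (φ1M : M → M) (φ1M' : M' → M')
    (hφ1Madd : ∀ x y : M, φ1M (x + y) = φ1M x + φ1M y)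
    (hφ1M'add : ∀ x y : M', φ1M' (x + y) = φ1M' x + φ1M' y)
    (hφ1Msemi : ∀ (s : S), ∀ x ∈ F1, φ1M (s • x) = φS s • φ1M x)
    (hφ1M'semi : ∀ (s : S), ∀ x ∈ F1', φ1M' (s • x) = φS s • φ1M' x)
    (hφ1Mdiv : ∀ s ∈ I, ∀ x : M, φ1M (s • x) = φ1S s • (c⁻¹ : Sˣ) • φ1M (E • x))
    (hφ1M'div : ∀ s ∈ I, ∀ x : M', φ1M' (s • x) = φ1S s • (c⁻¹ : Sˣ) • φ1M' (E • x))
    -- the images of the adapted basis form new bases (strong divisibility):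
    (bx : Module.Basis (Fin d) S M) (hbx : ∀ i, bx i = φ1M ((E ^ ni i) • e i))
    (by' : Module.Basis (Fin ν) S M') (hby : ∀ j, by' j = φ1M' ((E ^ mj j) • w j))
    -- the divided Frobenius on Fil¹(M ⊗ M'):
    (φ1T : (M ⊗[S] M') → (M ⊗[S] M'))
    (hφ1Tadd : ∀ x y : M ⊗[S] M', φ1T (x + y) = φ1T x + φ1T y)
    (hφ1T₁ : ∀ (x : M) (y : M'), x ∈ F1 →
      φ1T (x ⊗ₜ[S] y) = φ1M x ⊗ₜ[S] ((c⁻¹ : Sˣ) • φ1M' (E • y)))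
    (hφ1T₂ : ∀ (x : M) (y : M'), y ∈ F1' →
      φ1T (x ⊗ₜ[S] y) = ((c⁻¹ : Sˣ) • φ1M (E • x)) ⊗ₜ[S] φ1M' y)
    -- the fixed element e ∈ Fil¹(M ⊗ M') with φ₁(e) = e:
    (eE : M ⊗[S] M') (heE : eE ∈ F12) (hfix : φ1T eE = eE)
    -- the associated map F_e (as in the tensor-hom lemma):
    (Fe : Module.Dual S M →ₗ[S] M')
    (hFe : Fe = ∑ q : Fin d × Fin ν, ((e.tensorProduct w).repr eE q) •
      (LinearMap.smulRight (LinearMap.applyₗ (e q.1) : Module.Dual S M →ₗ[S] S) (w q.2)))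
    -- the dual Frobenius φ₁* on Fil¹(M*):
    (φ1star : Module.Dual S M → Module.Dual S M)
    (hstar : ∀ (f : Module.Dual S M) (i : Fin d),
      (φ1star f) (bx i) = φ1S ((E ^ ni i) * f (e i))) :
    ∀ f : Module.Dual S M, (∀ y ∈ F1, f y ∈ I) → φ1M' (Fe f) = Fe (φ1star f) :=
  stmt17_general p S I φS φ1S hφ1S E hE c hc M M' d ν d₁ ν₁ e w ni hni F1 F1' F12 hF1 hF1' hF12 φ1M
    φ1M' hφ1M'add hφ1Msemi hφ1M'semi hφ1Mdiv hφ1M'div bx hbx φ1T hφ1Tadd hφ1T₁ hφ1T₂ eE heE hfix Fe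
    hFe φ1star hstar
end
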